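/- arXiv:2106.06013 — 6 statements merged into one kernel-verified Lean document; each statement's English description precedes it below -/
import Mathlib

section
/- Let 0 < r < 1. For every constant 0 ≤ c < √2 there exists a bounded holomorphic function φ on the annulus A_r such that the kernel (λ,μ) ↦ (c²·(sup_{z∈A_r}|φ(z)|)² − φ(λ)·conj(φ(μ)))·k_{A_r}(λ,μ) is NOT positive semi-definite on A_r; that is, the constant √2 in the inequality ‖φ‖_{Mult(𝓗²(A_r))} ≤ √2·‖φ‖_∞ is best possible. -/
/-!
Take `φ(z) = zⁿ + rⁿ/zⁿ`, whose sup norm on `A_r` is at most `1 + rⁿ`. At the vertices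
`x_j = √r ζʲ` of a regular `2n`-gon on `|z| = √r` every `λμ̄` is `r` times a `2n`-th root of unity,
so the two geometric series making up `k_{A_r}` become finite: `(1 - r²ⁿ) k_{A_r}` is there the
Gram kernel of the `4n` functions `zᵏ`, `(r/z)ᵏ⁺¹` (`k < 2n`). Since `φ(x_j) = 2 r^{n/2} (-1)ʲ`,
testing the kernel against the weights `(-1)ʲ` and evaluating the Gram sums by orthogonality of
characters gives `8n² rⁿ (c²‖φ‖∞² - 2(1 + r²ⁿ)) / (1 - r²ⁿ)`, which is negative as soon as
`c² (1 + rⁿ)² < 2`, i.e. for large `n`.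
-/

open Complex ComplexConjugate ContinuousLinearMap
open scoped ComplexOrder

noncomputable section

/-- The open annulus `A_r = {z : r < |z| < 1}`. -/
def annulus (r : ℝ) : Set ℂ := {z : ℂ | r < ‖z‖ ∧ ‖z‖ < 1}

/-- The kernel `k_{A_r}(λ,μ) = (1-r²)/((1-λμ̄)(1-r²/(λμ̄)))`. -/
def kAnn (r : ℝ) (l m : ℂ) : ℂ :=
  (1 - (r : ℂ) ^ 2) / ((1 - l * conj m) * (1 - (r : ℂ) ^ 2 / (l * conj m)))

/-- A kernel `k` is positive semi-definite on a set `A`. -/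
def IsPosSemidefOn {X : Type*} (A : Set X) (k : X → X → ℂ) : Prop :=
  ∀ (n : ℕ) (x : Fin n → X), (∀ i, x i ∈ A) → ∀ w : Fin n → ℂ,
    0 ≤ ∑ i, ∑ j, k (x j) (x i) * w i * conj (w j)

/-- Integer powers of an operator `T` with given inverse `Tinv`:
`T^n` for `n ≥ 0` and `(T⁻¹)^{-n}` for `n < 0`. -/
def opZpow {H : Type*} [NormedAddCommGroup H] [NormedSpace ℂ H]
    (T Tinv : H →L[ℂ] H) (n : ℤ) : H →L[ℂ] H :=
  if 0 ≤ n then T ^ n.toNat else Tinv ^ (-n).toNat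

/-- The operator inequality `r²·T⁻¹(T⁻¹)* + T·T* ≤ (r²+1)·I`. -/
def opCond (r : ℝ) {H : Type*} [NormedAddCommGroup H] [InnerProductSpace ℂ H]
    [CompleteSpace H] (T Tinv : H →L[ℂ] H) : Prop :=
  (((r : ℂ) ^ 2 + 1) • (1 : H →L[ℂ] H)
    - ((r : ℂ) ^ 2 • (Tinv * ContinuousLinearMap.adjoint Tinv)
        + T * ContinuousLinearMap.adjoint T)).IsPositive

open Finset Filter Topology

section KernelQuadForm

variable {X ι : Type*} [Fintype ι]

def kernelQuadForm (k : X → X → ℂ) (x : ι → X) (w : ι → ℂ) : ℂ :=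
  ∑ i, ∑ j, k (x j) (x i) * w i * conj (w j)

lemma kernelQuadForm_congr {k k' : X → X → ℂ} {x : ι → X}
    (h : ∀ i j, k (x j) (x i) = k' (x j) (x i)) (w : ι → ℂ) :
    kernelQuadForm k x w = kernelQuadForm k' x w := by
  simp only [kernelQuadForm, h]

lemma mul_kernelQuadForm (a : ℂ) (k : X → X → ℂ) (x : ι → X) (w : ι → ℂ) :
    a * kernelQuadForm k x w = kernelQuadForm (fun l m => a * k l m) x w := by
  simp only [kernelQuadForm, mul_sum, mul_assoc]

lemma kernelQuadForm_const_mul (k : X → X → ℂ) (x : ι → X) (a : ℂ) (w : ι → ℂ) :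
    kernelQuadForm k x (fun i => a * w i) = normSq a * kernelQuadForm k x w := by
  simp only [kernelQuadForm, mul_sum, map_mul, ← mul_conj]
  congr! 2 with i _ j _
  ring

lemma kernelQuadForm_sub_mul (E : ℂ) (φ : X → ℂ) (k : X → X → ℂ) (x : ι → X) (w : ι → ℂ) :
    kernelQuadForm (fun l m => (E - φ l * conj (φ m)) * k l m) x w
      = E * kernelQuadForm k x w - kernelQuadForm k x (fun i => conj (φ (x i)) * w i) := by
  simp only [kernelQuadForm, mul_sum, ← sum_sub_distrib, map_mul, conj_conj]
  congr! 2 with i _ j _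
  ring

lemma kernelQuadForm_gram {κ : Type*} (s : Finset κ) (f : κ → X → ℂ) (x : ι → X) (w : ι → ℂ) :
    kernelQuadForm (fun l m => ∑ n ∈ s, f n l * conj (f n m)) x w
      = ∑ n ∈ s, (normSq (∑ j, f n (x j) * conj (w j)) : ℂ) := by
  simp only [kernelQuadForm, ← mul_conj, map_sum, map_mul, conj_conj, sum_mul, mul_sum]
  refine (sum_congr rfl fun i _ => sum_comm).trans (sum_comm.trans ?_)
  exact sum_congr rfl fun n _ => sum_congr rfl fun i _ => sum_congr rfl fun j _ => by ring

lemma IsPosSemidefOn.kernelQuadForm_nonneg {A : Set X} {k : X → X → ℂ} (h : IsPosSemidefOn A k)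
    {n : ℕ} {x : Fin n → X} (hx : ∀ i, x i ∈ A) (w : Fin n → ℂ) : 0 ≤ kernelQuadForm k x w :=
  h n x hx w

end KernelQuadForm

def annulusFeature (r : ℝ) : ℕ ⊕ ℕ → ℂ → ℂ :=
  Sum.elim (fun k z => z ^ k) (fun k z => ((r : ℂ) / z) ^ (k + 1))

/-- `k_{A_r}(λ, μ) = ∑_{k ≥ 0} aᵏ + ∑_{k ≥ 1} (r²/a)ᵏ` with `a = λμ̄`; when `aᴹ = rᴹ` both
geometric series are `1/(1 - rᴹ)` times their first `M` terms. -/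
lemma one_sub_pow_mul_kAnn {r : ℝ} (hr : r ≠ 0) {M : ℕ} (hrM : r ^ M ≠ 1) {l m : ℂ}
    (h : (l * conj m) ^ M = (r : ℂ) ^ M) :
    (1 - (r : ℂ) ^ M) * kAnn r l m
      = ∑ k ∈ (range M).disjSum (range M), annulusFeature r k l * conj (annulusFeature r k m) := by
  have hrM' : (r : ℂ) ^ M ≠ 1 := by exact_mod_cast hrM
  have hr' : (r : ℂ) ≠ 0 := by exact_mod_cast hr
  have hM : M ≠ 0 := by rintro rfl; exact hrM (pow_zero r)
  have hterm_a : ∀ k, l ^ k * conj (m ^ k) = (l * conj m) ^ k := fun k => by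
    rw [map_pow, mul_pow]
  have hterm_b : ∀ k, ((r : ℂ) / l) ^ (k + 1) * conj (((r : ℂ) / m) ^ (k + 1))
      = (r : ℂ) ^ 2 / (l * conj m) * ((r : ℂ) ^ 2 / (l * conj m)) ^ k := fun k => by
    rw [← pow_succ', map_pow, ← mul_pow, map_div₀, conj_ofReal, div_mul_div_comm, ← sq]
  simp only [kAnn, sum_disjSum, annulusFeature, Sum.elim_inl, Sum.elim_inr, hterm_a, hterm_b,
    ← mul_sum]
  set a := l * conj m
  set b := (r : ℂ) ^ 2 / a
  have ha0 : a ≠ 0 := by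
    rintro ha
    rw [ha, zero_pow hM] at h
    exact pow_ne_zero M hr' h.symm
  have hbM : b ^ M = (r : ℂ) ^ M := by
    rw [div_pow, h, ← pow_mul, mul_comm, pow_mul]; field_simp [pow_ne_zero M hr']
  have ha1 : 1 - a ≠ 0 := by
    rintro ha; rw [← sub_eq_zero.mp ha, one_pow] at h; exact hrM' h.symm
  have hb1 : 1 - b ≠ 0 := by
    rintro hb; rw [← sub_eq_zero.mp hb, one_pow] at hbM; exact hrM' hbM.symm
  have hgeom_a := geom_sum_mul_neg a M
  have hgeom_b := geom_sum_mul_neg b M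
  rw [h] at hgeom_a
  rw [hbM] at hgeom_b
  rw [eq_div_of_mul_eq ha1 hgeom_a, eq_div_of_mul_eq hb1 hgeom_b]
  field_simp
  linear_combination (div_mul_cancel₀ ((r : ℂ) ^ 2) ha0 : b * a = _)

lemma IsPrimitiveRoot.sum_zpow_pow {K : Type*} [Field K] {ζ : K} {M : ℕ}
    (hζ : IsPrimitiveRoot ζ M) (m : ℤ) :
    ∑ j : Fin M, (ζ ^ m) ^ (j : ℕ) = if (M : ℤ) ∣ m then (M : K) else 0 := by
  rw [Fin.sum_univ_eq_sum_range (fun j => (ζ ^ m) ^ j)]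
  split_ifs with hdvd
  · simp [(hζ.zpow_eq_one_iff_dvd m).mpr hdvd]
  · have hne : ζ ^ m ≠ 1 := fun h => hdvd ((hζ.zpow_eq_one_iff_dvd m).mp h)
    rw [geom_sum_eq hne, ← zpow_natCast, ← zpow_mul, mul_comm, zpow_mul, zpow_natCast,
      hζ.pow_eq_one, one_zpow, sub_self, zero_div]

lemma natCast_dvd_sub_iff_eq_of_lt {M k p : ℕ} (hk : k < M) (hp : p < M) :
    (M : ℤ) ∣ (k : ℤ) - p ↔ k = p := by
  refine ⟨fun h => ?_, fun h => by simp [h]⟩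
  have := Int.eq_zero_of_abs_lt_dvd h (abs_lt.mpr ⟨by omega, by omega⟩)
  omega

lemma natCast_dvd_neg_add_iff_add_eq_of_lt {M k p : ℕ} (hk : k < M) (hp : p < M) :
    (M : ℤ) ∣ -((k : ℤ) + 1 + p) ↔ k + 1 + p = M := by
  rw [Int.dvd_neg]
  refine ⟨fun h => ?_, fun h => ⟨1, by omega⟩⟩
  have := Int.eq_zero_of_abs_lt_dvd ((Int.dvd_sub h (dvd_refl _)))
    (abs_lt.mpr ⟨by omega, by omega⟩)
  omega

section RootsOfUnity

variable {r : ℝ} {ζ : ℂ} {M : ℕ}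

lemma sum_annulusFeature_inl (hζ : IsPrimitiveRoot ζ M) (hM : M ≠ 0) (k p : ℕ) :
    ∑ j : Fin M, annulusFeature r (.inl k) ((√r : ℂ) * ζ ^ (j : ℕ)) * conj (ζ ^ (p * (j : ℕ)))
      = (√r : ℂ) ^ k * if (M : ℤ) ∣ (k : ℤ) - p then (M : ℂ) else 0 := by
  have hζ0 : ζ ≠ 0 := hζ.ne_zero hM
  rw [← hζ.sum_zpow_pow, mul_sum]
  refine sum_congr rfl fun j _ => ?_
  rw [annulusFeature, Sum.elim_inl, ← inv_eq_conj (by rw [norm_pow, hζ.norm'_eq_one hM, one_pow]),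
    mul_pow, mul_assoc]
  congr 1
  simp only [← zpow_natCast, ← zpow_neg, ← zpow_mul, ← zpow_add₀ hζ0]
  congr 1
  push_cast
  ring

lemma sum_annulusFeature_inr (hζ : IsPrimitiveRoot ζ M) (hM : M ≠ 0) (k p : ℕ) :
    ∑ j : Fin M, annulusFeature r (.inr k) ((√r : ℂ) * ζ ^ (j : ℕ)) * conj (ζ ^ (p * (j : ℕ)))
      = (√r : ℂ) ^ (k + 1) * if (M : ℤ) ∣ -((k : ℤ) + 1 + p) then (M : ℂ) else 0 := by
  have hζ0 : ζ ≠ 0 := hζ.ne_zero hM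
  have hsqrt : (r : ℂ) / √r = √r := by
    rw [← ofReal_div, Real.div_sqrt]
  rw [← hζ.sum_zpow_pow, mul_sum]
  refine sum_congr rfl fun j _ => ?_
  rw [annulusFeature, Sum.elim_inr, ← inv_eq_conj (by rw [norm_pow, hζ.norm'_eq_one hM, one_pow]),
    ← div_div, hsqrt, div_pow, div_eq_mul_inv, mul_assoc]
  congr 1
  simp only [← zpow_natCast, ← zpow_neg, ← zpow_mul, ← zpow_add₀ hζ0]
  congr 1
  push_cast
  ring

end RootsOfUnity

lemma one_sub_pow_mul_kernelQuadForm_kAnn {r : ℝ} (hr0 : 0 < r) (hr1 : r < 1) {ζ : ℂ} {M : ℕ}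
    (hζ : IsPrimitiveRoot ζ M) {p : ℕ} (hp : p < M) :
    (1 - (r : ℂ) ^ M) * kernelQuadForm (kAnn r) (fun j : Fin M => (√r : ℂ) * ζ ^ (j : ℕ))
        (fun j => ζ ^ (p * (j : ℕ)))
      = (M : ℂ) ^ 2 * ((r : ℂ) ^ p + (r : ℂ) ^ (M - p)) := by
  have hM : M ≠ 0 := by omega
  have hsqrt : (√r : ℂ) * √r = r := by rw [← ofReal_mul, Real.mul_self_sqrt hr0.le]
  have hnormSq : normSq (√r : ℂ) = r := by rw [normSq_ofReal, Real.mul_self_sqrt hr0.le]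
  have hpoints : ∀ i j : Fin M,
      ((√r : ℂ) * ζ ^ (j : ℕ) * conj ((√r : ℂ) * ζ ^ (i : ℕ))) ^ M = (r : ℂ) ^ M := by
    have hroot : ∀ n : ℕ, (ζ ^ n) ^ M = 1 := fun n => by
      rw [pow_right_comm, hζ.pow_eq_one, one_pow]
    intro i j
    rw [map_mul, conj_ofReal, mul_mul_mul_comm, hsqrt, mul_pow, mul_pow, hroot, ← map_pow, hroot,
      map_one, mul_one, mul_one]
  rw [mul_kernelQuadForm, kernelQuadForm_congr (k' := fun l m => ∑ k ∈ (range M).disjSum (range M),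
      annulusFeature r k l * conj (annulusFeature r k m)) (fun i j =>
      one_sub_pow_mul_kAnn hr0.ne' (pow_lt_one₀ hr0.le hr1 hM).ne (hpoints i j)),
    kernelQuadForm_gram, sum_disjSum]
  simp only [sum_annulusFeature_inl hζ hM, sum_annulusFeature_inr hζ hM]
  rw [sum_eq_single_of_mem p (mem_range.2 hp), sum_eq_single_of_mem (M - 1 - p) (by simp; omega)]
  · rw [if_pos (by simp),
      if_pos ((natCast_dvd_neg_add_iff_add_eq_of_lt (by omega) hp).2 (by omega)),
      show M - 1 - p + 1 = M - p by omega]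
    simp only [map_mul, map_pow, hnormSq, normSq_natCast]
    push_cast
    ring
  · intro k hk hne
    rw [if_neg (mt (natCast_dvd_neg_add_iff_add_eq_of_lt (mem_range.1 hk) hp).1 (by omega)),
      mul_zero, map_zero, ofReal_zero]
  · intro k hk hne
    rw [if_neg (mt (natCast_dvd_sub_iff_eq_of_lt (mem_range.1 hk) hp).1 hne), mul_zero, map_zero,
      ofReal_zero]

def symmMonomial (r : ℝ) (n : ℕ) (z : ℂ) : ℂ := z ^ n + (r : ℂ) ^ n / z ^ n

section SymmMonomial

variable {r : ℝ} {n : ℕ}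

lemma ne_zero_of_mem_annulus (hr : 0 ≤ r) {z : ℂ} (hz : z ∈ annulus r) : z ≠ 0 := by
  rintro rfl
  exact (norm_zero (E := ℂ) ▸ hz.1).not_ge hr

lemma differentiableOn_symmMonomial (hr : 0 ≤ r) :
    DifferentiableOn ℂ (symmMonomial r n) (annulus r) := by
  intro z hz
  have hzn := pow_ne_zero n (ne_zero_of_mem_annulus hr hz)
  unfold symmMonomial
  fun_prop (disch := exact hzn)

lemma norm_symmMonomial_le (hr : 0 ≤ r) {z : ℂ} (hz : z ∈ annulus r) :
    ‖symmMonomial r n z‖ ≤ 1 + r ^ n := by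
  set t := ‖z‖ ^ n
  have ht0 : 0 < t := pow_pos (hr.trans_lt hz.1) n
  have hrt : r ^ n ≤ t := pow_le_pow_left₀ hr hz.1.le n
  have ht1 : t ≤ 1 := pow_le_one₀ (norm_nonneg z) hz.2.le
  calc ‖symmMonomial r n z‖ ≤ t + r ^ n / t := by
        refine (norm_add_le _ _).trans_eq ?_
        rw [norm_div, norm_pow, norm_pow, norm_real, Real.norm_of_nonneg hr]
    _ ≤ 1 + r ^ n := by
        have h : 1 + r ^ n - (t + r ^ n / t) = (1 - t) * (t - r ^ n) / t := by
          field_simp; ring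
        rw [← sub_nonneg, h]
        exact div_nonneg (mul_nonneg (sub_nonneg.2 ht1) (sub_nonneg.2 hrt)) ht0.le

lemma symmMonomial_sqrt_mul_pow {ζ : ℂ} (hζ : ζ ^ n = -1) (j : ℕ) :
    symmMonomial r n ((√r : ℂ) * ζ ^ j) = 2 * (√r : ℂ) ^ n * ζ ^ (n * j) := by
  have hsign : ((-1 : ℂ) ^ j)⁻¹ = (-1) ^ j := by rw [← inv_pow, inv_neg_one]
  rw [symmMonomial, mul_pow, ← pow_mul, mul_comm j n, pow_mul, hζ, div_mul_eq_div_div,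
    div_eq_mul_inv _ ((-1 : ℂ) ^ j), hsign, ← div_pow, ← ofReal_div, Real.div_sqrt]
  ring

end SymmMonomial

lemma one_sub_pow_mul_kernelQuadForm_symmMonomial {r : ℝ} (hr0 : 0 < r) (hr1 : r < 1) {n : ℕ}
    (hn : 0 < n) {ζ : ℂ} (hζ : IsPrimitiveRoot ζ (2 * n)) (E : ℂ) :
    (1 - (r : ℂ) ^ (2 * n)) * kernelQuadForm
        (fun l m => (E - symmMonomial r n l * conj (symmMonomial r n m)) * kAnn r l m)
        (fun j : Fin (2 * n) => (√r : ℂ) * ζ ^ (j : ℕ)) (fun j => ζ ^ (n * (j : ℕ)))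
      = 8 * n ^ 2 * r ^ n * (E - 2 * (1 + r ^ (2 * n))) := by
  have hζn : ζ ^ n = -1 := (hζ.pow (by omega) (mul_comm 2 n)).eq_neg_one_of_two_right
  have hweights : (fun j : Fin (2 * n) =>
      conj (symmMonomial r n ((√r : ℂ) * ζ ^ (j : ℕ))) * ζ ^ (n * (j : ℕ)))
        = fun j : Fin (2 * n) => 2 * (√r : ℂ) ^ n * ζ ^ (0 * (j : ℕ)) := by
    funext j
    rw [symmMonomial_sqrt_mul_pow hζn, map_mul, mul_assoc, conj_mul', norm_pow,
      hζ.norm'_eq_one (by omega)]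
    simp [map_ofNat]
  have hQn := one_sub_pow_mul_kernelQuadForm_kAnn hr0 hr1 hζ (p := n) (by omega)
  have hQ0 := one_sub_pow_mul_kernelQuadForm_kAnn hr0 hr1 hζ (p := 0) (by omega)
  have hnormSq : (normSq (2 * (√r : ℂ) ^ n) : ℂ) = 4 * r ^ n := by
    rw [map_mul, map_pow, normSq_ofReal, Real.mul_self_sqrt hr0.le]
    push_cast
    norm_num
  rw [show 2 * n - n = n by omega] at hQn
  rw [Nat.sub_zero] at hQ0
  rw [kernelQuadForm_sub_mul, hweights, kernelQuadForm_const_mul, hnormSq]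
  push_cast at hQn hQ0
  linear_combination E * hQn - 4 * (r : ℂ) ^ n * hQ0

lemma sqrt_mul_mem_annulus {r : ℝ} (hr0 : 0 < r) (hr1 : r < 1) {ω : ℂ} (hω : ‖ω‖ = 1) :
    (√r : ℂ) * ω ∈ annulus r := by
  rw [annulus, Set.mem_ofPred_eq, norm_mul, hω, mul_one, norm_real,
    Real.norm_of_nonneg (Real.sqrt_nonneg r)]
  exact ⟨(Real.lt_sqrt hr0.le).2 (by nlinarith), (Real.sqrt_lt' one_pos).2 (by rwa [one_pow])⟩

lemma exists_pos_mul_one_add_pow_sq_lt {r c : ℝ} (hr0 : 0 ≤ r) (hr1 : r < 1) (hc : c ^ 2 < 2) :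
    ∃ n : ℕ, 0 < n ∧ c ^ 2 * (1 + r ^ n) ^ 2 < 2 := by
  have h : Tendsto (fun n : ℕ => c ^ 2 * (1 + r ^ n) ^ 2) atTop (𝓝 (c ^ 2 * (1 + 0) ^ 2)) :=
    (((tendsto_pow_atTop_nhds_zero_of_lt_one hr0 hr1).const_add 1).pow 2).const_mul _
  rw [add_zero, one_pow, mul_one] at h
  exact ((eventually_gt_atTop 0).and (h.eventually (gt_mem_nhds hc))).exists

/-- The constant `√2` in `‖φ‖_{Mult(𝓗²(A_r))} ≤ √2 ‖φ‖_∞` is best possible: for every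
`0 ≤ c < √2` there is a bounded holomorphic `φ` on `A_r` for which the kernel
`(c²‖φ‖_∞² - φ(λ)φ(μ)*)k_{A_r}` is not positive semi-definite. -/
theorem sqrt_two_is_optimal (r : ℝ) (hr0 : 0 < r) (hr1 : r < 1)
    (c : ℝ) (hc0 : 0 ≤ c) (hc : c < Real.sqrt 2) :
    ∃ φ : ℂ → ℂ, DifferentiableOn ℂ φ (annulus r) ∧
      BddAbove ((fun z => ‖φ z‖) '' annulus r) ∧
      ¬ IsPosSemidefOn (annulus r)
        (fun l m =>
          (((c ^ 2 * (sSup ((fun z => ‖φ z‖) '' annulus r)) ^ 2 : ℝ) : ℂ)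
            - φ l * conj (φ m)) * kAnn r l m) := by
  obtain ⟨n, hn, hcn⟩ := exists_pos_mul_one_add_pow_sq_lt hr0.le hr1 ((Real.lt_sqrt hc0).1 hc)
  have hbound : ∀ z ∈ annulus r, ‖symmMonomial r n z‖ ≤ 1 + r ^ n :=
    fun z hz => norm_symmMonomial_le hr0.le hz
  refine ⟨symmMonomial r n, differentiableOn_symmMonomial hr0.le,
    ⟨1 + r ^ n, Set.forall_mem_image.2 hbound⟩, fun hpsd => ?_⟩
  set S := sSup ((fun z => ‖symmMonomial r n z‖) '' annulus r)
  have hS : c ^ 2 * S ^ 2 < 2 := by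
    have hS0 : 0 ≤ S := Real.sSup_nonneg (Set.forall_mem_image.2 fun z _ => norm_nonneg _)
    have hS1 : S ≤ 1 + r ^ n := Real.sSup_le (Set.forall_mem_image.2 hbound) (by positivity)
    calc c ^ 2 * S ^ 2 ≤ c ^ 2 * (1 + r ^ n) ^ 2 := by gcongr
      _ < 2 := hcn
  obtain ⟨ζ, hζ⟩ : ∃ ζ : ℂ, IsPrimitiveRoot ζ (2 * n) :=
    ⟨_, Complex.isPrimitiveRoot_exp (2 * n) (by omega)⟩
  have hform := one_sub_pow_mul_kernelQuadForm_symmMonomial hr0 hr1 hn hζ (c ^ 2 * S ^ 2 : ℝ)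
  have hpos : (0 : ℂ) ≤ 1 - (r : ℂ) ^ (2 * n) := by
    exact_mod_cast sub_nonneg.2 (pow_le_one₀ hr0.le hr1.le)
  have hx : ∀ j : Fin (2 * n), (√r : ℂ) * ζ ^ (j : ℕ) ∈ annulus r := fun j =>
    sqrt_mul_mem_annulus hr0 hr1 (by rw [norm_pow, hζ.norm'_eq_one (by omega), one_pow])
  have hnonneg := mul_nonneg hpos (hpsd.kernelQuadForm_nonneg hx (fun j => ζ ^ (n * (j : ℕ))))
  rw [hform] at hnonneg
  have hreal : 0 ≤ 8 * n ^ 2 * r ^ n * (c ^ 2 * S ^ 2 - 2 * (1 + r ^ (2 * n))) := by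
    exact_mod_cast hnonneg
  have hneg : 8 * n ^ 2 * r ^ n * (c ^ 2 * S ^ 2 - 2 * (1 + r ^ (2 * n))) < 0 :=
    mul_neg_of_pos_of_neg (by positivity) (by nlinarith [pow_nonneg hr0.le (2 * n)])
  exact hneg.not_ge hreal
end
end

section
/- Let 0 < r < 1 and for an integer n ≥ 1 define g_n(z) = r^n/z^n + z^n on the annulus A_r. Then sup_{z ∈ A_r} |g_n(z)| = 1 + r^n. -/
open Complex ComplexConjugate ContinuousLinearMap
open scoped ComplexOrder

noncomputable section

/-! The bound `|rⁿ/zⁿ + zⁿ| ≤ rⁿ/|z|ⁿ + |z|ⁿ ≤ 1 + rⁿ` holds on the annulus because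
`c/s + s - (1 + c) = (s - c)(s - 1)/s ≤ 0` for `c ≤ s ≤ 1`. It is attained in the limit `z → 1`,
a boundary point of the annulus at which `rⁿ/zⁿ + zⁿ` is continuous. -/

theorem div_add_le_one_add {c s : ℝ} (hs : 0 < s) (hcs : c ≤ s) (hs1 : s ≤ 1) :
    c / s + s ≤ 1 + c := by
  rw [div_add' _ _ _ hs.ne', div_le_iff₀ hs]
  nlinarith

theorem norm_div_add_le_one_add_norm {𝕜 : Type*} [NormedDivisionRing 𝕜] {c w : 𝕜}
    (hcw : ‖c‖ ≤ ‖w‖) (hw1 : ‖w‖ ≤ 1) : ‖c / w + w‖ ≤ 1 + ‖c‖ := by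
  rcases (norm_nonneg w).eq_or_lt with hw0 | hw0
  · have hw : w = 0 := norm_eq_zero.mp hw0.symm
    simp only [hw, div_zero, add_zero, norm_zero]
    positivity
  calc ‖c / w + w‖ ≤ ‖c‖ / ‖w‖ + ‖w‖ := (norm_add_le _ _).trans_eq (by rw [norm_div])
    _ ≤ 1 + ‖c‖ := div_add_le_one_add hw0 hcw hw1

theorem norm_div_pow_add_pow_le_of_mem_annulus {r : ℝ} (hr : 0 ≤ r) (n : ℕ) {z : ℂ}
    (hz : z ∈ annulus r) : ‖(r : ℂ) ^ n / z ^ n + z ^ n‖ ≤ 1 + r ^ n := by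
  have hrn : ‖(r : ℂ) ^ n‖ = r ^ n := by rw [norm_pow, norm_real, Real.norm_of_nonneg hr]
  rw [← hrn]
  refine norm_div_add_le_one_add_norm ?_ ?_
  · rw [hrn, norm_pow]
    exact pow_le_pow_left₀ hr hz.1.le n
  · rw [norm_pow]
    exact pow_le_one₀ (norm_nonneg z) hz.2.le

theorem one_mem_closure_annulus {r : ℝ} (hr0 : 0 ≤ r) (hr1 : r < 1) :
    (1 : ℂ) ∈ closure (annulus r) := by
  have := right_nhdsWithin_Ioo_neBot hr1
  refine mem_closure_of_tendsto (f := ((↑) : ℝ → ℂ)) (b := nhdsWithin 1 (Set.Ioo r 1)) ?_ ?_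
  · exact_mod_cast continuous_ofReal.continuousWithinAt
  · filter_upwards [self_mem_nhdsWithin] with t ht
    have ht0 : 0 ≤ t := hr0.trans ht.1.le
    simpa [annulus, Real.norm_of_nonneg ht0] using ht

theorem sup_abs_g_eq_general (r : ℝ) (hr0 : 0 < r) (hr1 : r < 1) (n : ℕ) :
    sSup ((fun z : ℂ => ‖(r : ℂ) ^ n / z ^ n + z ^ n‖) '' annulus r)
      = 1 + r ^ n := by
  set g : ℂ → ℝ := fun z => ‖(r : ℂ) ^ n / z ^ n + z ^ n‖
  have h1 := one_mem_closure_annulus hr0.le hr1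
  have hg1 : g 1 = 1 + r ^ n := by
    have : (r : ℂ) ^ n / 1 ^ n + 1 ^ n = ((1 + r ^ n : ℝ) : ℂ) := by push_cast; ring
    simp only [g, this, norm_real, Real.norm_of_nonneg (by positivity : (0 : ℝ) ≤ 1 + r ^ n)]
  have hg_cont : ContinuousAt g 1 := by fun_prop (disch := simp)
  have hlub : IsLUB (g '' annulus r) (1 + r ^ n) := by
    refine isLUB_of_mem_closure ?_ ?_
    · rintro _ ⟨z, hz, rfl⟩
      exact norm_div_pow_add_pow_le_of_mem_annulus hr0.le n hz
    · exact hg1 ▸ hg_cont.continuousWithinAt.mem_closure_image h1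
  exact hlub.csSup_eq ((closure_nonempty_iff.mp ⟨1, h1⟩).image g)

/-- For `g_n(z) = rⁿ/zⁿ + zⁿ` on the annulus `A_r`, `sup_{z ∈ A_r} |g_n(z)| = 1 + rⁿ`. -/
theorem sup_abs_g_eq (r : ℝ) (hr0 : 0 < r) (hr1 : r < 1) (n : ℕ) (hn : 1 ≤ n) :
    sSup ((fun z : ℂ => ‖(r : ℂ) ^ n / z ^ n + z ^ n‖) '' annulus r)
      = 1 + r ^ n :=
  sup_abs_g_eq_general r hr0 hr1 n

end
end

section
/- Let 0 < r < 1 and let U : A_r × A_r → ℂ be a positive semi-definite hereditary function on the annulus A_r, i.e. the map (λ,μ) ↦ U(λ, conj(μ)) is holomorphic on A_r × A_r (as an open subset of ℂ²) and U is a positive semi-definite kernel on A_r. Then there exists a sequence (f_n)_{n∈ℕ} of holomorphic functions on A_r such that U(λ,μ) = ∑_{n=1}^∞ f_n(λ)·conj(f_n(μ)) for all λ, μ ∈ A_r, the series converging uniformly on compact subsets of A_r × A_r. -/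
open Complex ComplexConjugate ContinuousLinearMap
open scoped ComplexOrder

noncomputable section

/-!
A positive semi-definite kernel is a Gram kernel: `U l m = ⟪k l, k m⟫` for a map `k` into an
inner product space (Moore–Aronszajn), and `k` inherits continuity from `U`. Run Gram–Schmidt on
`k` along a dense sequence `μ` of the annulus and put `fₙ l = ⟪k l, eₙ⟫`. If `ρ_N` removes the
components along `e₀, …, e_{N-1}`, then `U l m - ∑_{n<N} fₙ l conj (fₙ m) = ⟪ρ_N (k l), ρ_N (k m)⟫`,
which Cauchy–Schwarz bounds by `‖ρ_N (k l)‖ ‖ρ_N (k m)‖`. Since `ρ_N` is the projection onto the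
orthogonal complement of `span {k (μ j) | j < N}`, `‖ρ_N x‖ ≤ ‖x - k (μ j)‖` for `j < N`; so
`‖ρ_N x‖` decreases to `0` on the closure of `k ∘ μ`, uniformly on compact sets by Dini's theorem.
Each `eₙ` is a finite combination of the `k (μ j)`, so each `fₙ` is a finite combination of the
holomorphic functions `U · (μ j)`.
-/

open scoped InnerProductSpace
open Filter Topology Set Submodule InnerProductSpace

namespace IsPosSemidefOn

variable {X : Type*} {A : Set X} {U : X → X → ℂ}

theorem apply_swap_eq_conj (h : IsPosSemidefOn A U) {x y : X} (hx : x ∈ A) (hy : y ∈ A) :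
    U y x = conj (U x y) := by
  have hxy : ∀ i, ![x, y] i ∈ A := fun i => by fin_cases i <;> assumption
  have h1 := h 2 ![x, y] hxy ![1, 1]
  have hI := h 2 ![x, y] hxy ![1, I]
  have hxx := h 1 ![x] (fun _ => by simpa) ![1]
  have hyy := h 1 ![y] (fun _ => by simpa) ![1]
  simp only [Fin.sum_univ_two, Fin.sum_univ_one, Complex.nonneg_iff, Fin.isValue,
    Matrix.cons_val_zero, Matrix.cons_val_one, Matrix.cons_val_fin_one, mul_one, map_one, conj_I,
    mul_neg, add_re, add_im, neg_re, neg_im, mul_re, mul_im, I_re, I_im, mul_zero, zero_sub,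
    neg_neg, add_zero] at h1 hI hxx hyy
  apply Complex.ext <;> simp only [conj_re, conj_im] <;> linarith

theorem sum_nonneg (h : IsPosSemidefOn A U) (s : Finset A) (w : A → ℂ) :
    0 ≤ ∑ i ∈ s, ∑ j ∈ s, U j i * w i * conj (w j) := by
  have hsum (g : A → ℂ) : ∑ i, g (s.equivFin.symm i) = ∑ a ∈ s, g a := by
    rw [Equiv.sum_comp s.equivFin.symm (fun a : s => g a), Finset.sum_coe_sort]
  have := h _ (fun i => (s.equivFin.symm i : X)) (fun i => (s.equivFin.symm i : A).2)
    (fun i => w (s.equivFin.symm i))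
  convert this using 1
  rw [← hsum]
  exact Finset.sum_congr rfl fun i _ => (hsum _).symm

-- `RKHS.OfKernel` takes operator-valued kernels: `U` enters as multiplication operators on `ℂ`.
theorem posSemidef_smul_one (h : IsPosSemidefOn A U) :
    (Matrix.of fun x y : A => U x y • (1 : ℂ →L[ℂ] ℂ)).PosSemidef := by
  refine (RKHS.posSemidef_tfae.out 0 2).2 (⟨?_, fun w => ?_⟩ : _ ∧ _)
  · refine Matrix.IsHermitian.ext fun x y => ?_
    simp [h.apply_swap_eq_conj x.2 y.2]
  · convert (Complex.nonneg_iff.1 (h.sum_nonneg w.support w)).1 using 1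
    rw [← Complex.conj_re]
    simp only [Finsupp.sum, map_sum, map_mul, Complex.conj_conj, Complex.re_sum, Matrix.of_apply,
      smul_apply, one_apply_eq_self, smul_eq_mul, RCLike.inner_apply, RCLike.re_to_complex]
    simp only [mul_comm, mul_left_comm]

universe u in
theorem exists_inner_eq {X : Type u} {A : Set X} {U : X → X → ℂ} (h : IsPosSemidefOn A U) :
    ∃ (E : Type u) (_ : NormedAddCommGroup E) (_ : InnerProductSpace ℂ E) (k : X → E),
      ∀ x ∈ A, ∀ y ∈ A, ⟪k x, k y⟫_ℂ = U x y := by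
  classical
  let K : Matrix A A (ℂ →L[ℂ] ℂ) := .of fun x y => U x y • 1
  have : Fact K.PosSemidef := ⟨h.posSemidef_smul_one⟩
  refine ⟨RKHS.OfKernel K, inferInstance, inferInstance,
    fun x => if hx : x ∈ A then RKHS.kerFun (RKHS.OfKernel K) ⟨x, hx⟩ 1 else 0,
    fun x hx y hy => ?_⟩
  simp [hx, hy, RKHS.kerFun_apply, K, h.apply_swap_eq_conj hx hy]

end IsPosSemidefOn

section GramSchmidtResidual

variable (𝕜 : Type*) {E : Type*} [RCLike 𝕜] [NormedAddCommGroup E] [InnerProductSpace 𝕜 E]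
  (v : ℕ → E)

def gramSchmidtResidual (N : ℕ) (x : E) : E :=
  x - ∑ n ∈ Finset.range N, ⟪gramSchmidtNormed 𝕜 v n, x⟫_𝕜 • gramSchmidtNormed 𝕜 v n

variable {𝕜 v}

theorem inner_gramSchmidtNormed_of_ne {m n : ℕ} (h : m ≠ n) :
    ⟪gramSchmidtNormed 𝕜 v m, gramSchmidtNormed 𝕜 v n⟫_𝕜 = 0 := by
  simp [gramSchmidtNormed, inner_smul_left, inner_smul_right, gramSchmidt_orthogonal 𝕜 v h]

-- `gramSchmidtNormed 𝕜 v m` is a unit vector, or `0` when `v m` depends on the earlier `v j`.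
theorem inner_gramSchmidtNormed_mul_inner_self (m : ℕ) (x : E) :
    ⟪gramSchmidtNormed 𝕜 v m, x⟫_𝕜 * ⟪gramSchmidtNormed 𝕜 v m, gramSchmidtNormed 𝕜 v m⟫_𝕜 =
      ⟪gramSchmidtNormed 𝕜 v m, x⟫_𝕜 := by
  by_cases h : gramSchmidtNormed 𝕜 v m = 0
  · simp [h]
  · simp [inner_self_eq_norm_sq_to_K, gramSchmidtNormed_unit_length' h]

theorem inner_gramSchmidtNormed_gramSchmidtResidual {m N : ℕ} (hm : m < N) (x : E) :
    ⟪gramSchmidtNormed 𝕜 v m, gramSchmidtResidual 𝕜 v N x⟫_𝕜 = 0 := by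
  rw [gramSchmidtResidual, inner_sub_right, inner_sum,
    Finset.sum_eq_single_of_mem m (Finset.mem_range.2 hm) fun n _ hnm => by
      rw [inner_smul_right, inner_gramSchmidtNormed_of_ne hnm.symm, mul_zero],
    inner_smul_right, inner_gramSchmidtNormed_mul_inner_self, sub_self]

theorem inner_gramSchmidtResidual_gramSchmidtResidual (N : ℕ) (x y : E) :
    ⟪gramSchmidtResidual 𝕜 v N x, gramSchmidtResidual 𝕜 v N y⟫_𝕜 =
      ⟪x, y⟫_𝕜 - ∑ n ∈ Finset.range N, ⟪x, gramSchmidtNormed 𝕜 v n⟫_𝕜 *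
        ⟪gramSchmidtNormed 𝕜 v n, y⟫_𝕜 := by
  have horth : ∀ n ∈ Finset.range N,
      ⟪gramSchmidtResidual 𝕜 v N x, gramSchmidtNormed 𝕜 v n⟫_𝕜 = 0 := fun n hn =>
    inner_eq_zero_symm.1 (inner_gramSchmidtNormed_gramSchmidtResidual (Finset.mem_range.1 hn) x)
  rw [gramSchmidtResidual.eq_1 𝕜 v N y, inner_sub_right, inner_sum,
    Finset.sum_eq_zero fun n hn => by rw [inner_smul_right, horth n hn, mul_zero], sub_zero,
    gramSchmidtResidual, inner_sub_left, sum_inner]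
  simp only [inner_smul_left, inner_conj_symm]

theorem norm_gramSchmidtResidual_sq (N : ℕ) (x : E) :
    ‖gramSchmidtResidual 𝕜 v N x‖ ^ 2 =
      ‖x‖ ^ 2 - ∑ n ∈ Finset.range N, ‖⟪gramSchmidtNormed 𝕜 v n, x⟫_𝕜‖ ^ 2 := by
  have := inner_gramSchmidtResidual_gramSchmidtResidual (𝕜 := 𝕜) (v := v) N x x
  simp only [inner_self_eq_norm_sq_to_K, ← inner_conj_symm x, RCLike.conj_mul] at this
  exact_mod_cast this

theorem norm_gramSchmidtResidual_le {N : ℕ} {w : E}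
    (hw : w ∈ span 𝕜 (gramSchmidtNormed 𝕜 v '' Iio N)) (x : E) :
    ‖gramSchmidtResidual 𝕜 v N x‖ ≤ ‖x - w‖ := by
  set p := ∑ n ∈ Finset.range N, ⟪gramSchmidtNormed 𝕜 v n, x⟫_𝕜 • gramSchmidtNormed 𝕜 v n
  have hp : p ∈ span 𝕜 (gramSchmidtNormed 𝕜 v '' Iio N) :=
    sum_mem fun n hn => smul_mem _ _ (subset_span ⟨n, Finset.mem_range.1 hn, rfl⟩)
  have horth : span 𝕜 (gramSchmidtNormed 𝕜 v '' Iio N) ≤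
      (𝕜 ∙ gramSchmidtResidual 𝕜 v N x)ᗮ := by
    rw [span_le]
    rintro _ ⟨n, hn, rfl⟩
    exact mem_orthogonal_singleton_iff_inner_right.2
      (inner_eq_zero_symm.1 (inner_gramSchmidtNormed_gramSchmidtResidual hn x))
  have hpyth := norm_add_sq_eq_norm_sq_add_norm_sq_of_inner_eq_zero
    (gramSchmidtResidual 𝕜 v N x) (p - w)
    (mem_orthogonal_singleton_iff_inner_right.1 (horth (sub_mem hp hw)))
  have hsplit : gramSchmidtResidual 𝕜 v N x + (p - w) = x - w := by
    rw [gramSchmidtResidual]; abel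
  rw [hsplit] at hpyth
  exact (mul_self_le_mul_self_iff (norm_nonneg _) (norm_nonneg _)).2
    (by nlinarith [mul_self_nonneg ‖p - w‖])

theorem antitone_norm_gramSchmidtResidual (x : E) :
    Antitone fun N => ‖gramSchmidtResidual 𝕜 v N x‖ := by
  intro N M hNM
  have := norm_gramSchmidtResidual_le (𝕜 := 𝕜) (v := v) (N := M)
    (w := x - gramSchmidtResidual 𝕜 v N x) ?_ x
  · rwa [sub_sub_cancel] at this
  rw [gramSchmidtResidual, sub_sub_cancel]
  exact sum_mem fun n hn => smul_mem _ _
    (subset_span ⟨n, (Finset.mem_range.1 hn).trans_le hNM, rfl⟩)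

theorem norm_gramSchmidtResidual_le_norm {N : ℕ} (x : E) :
    ‖gramSchmidtResidual 𝕜 v N x‖ ≤ ‖x‖ := by
  simpa [gramSchmidtResidual] using
    antitone_norm_gramSchmidtResidual (𝕜 := 𝕜) (v := v) x (Nat.zero_le N)

theorem norm_gramSchmidtResidual_le_norm_sub {j N : ℕ} (hj : j < N) (x : E) :
    ‖gramSchmidtResidual 𝕜 v N x‖ ≤ ‖x - v j‖ := by
  refine norm_gramSchmidtResidual_le ?_ x
  rw [span_gramSchmidtNormed, span_gramSchmidt_Iio]
  exact subset_span ⟨j, hj, rfl⟩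

theorem tendsto_norm_gramSchmidtResidual {x : E} (hx : x ∈ closure (range v)) :
    Tendsto (fun N => ‖gramSchmidtResidual 𝕜 v N x‖) atTop (𝓝 0) := by
  refine Metric.tendsto_atTop.2 fun ε hε => ?_
  obtain ⟨j, hj⟩ := Metric.mem_closure_range_iff.1 hx ε hε
  refine ⟨j + 1, fun N hN => ?_⟩
  rw [dist_zero_right, norm_norm]
  calc ‖gramSchmidtResidual 𝕜 v N x‖ ≤ ‖x - v j‖ := norm_gramSchmidtResidual_le_norm_sub hN x
    _ < ε := by rwa [← dist_eq_norm]

theorem continuous_gramSchmidtResidual (N : ℕ) : Continuous (gramSchmidtResidual 𝕜 v N) := by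
  unfold gramSchmidtResidual
  fun_prop

theorem tendstoUniformlyOn_norm_gramSchmidtResidual {C : Set E} (hC : IsCompact C)
    (hCv : C ⊆ closure (range v)) :
    TendstoUniformlyOn (fun N x => ‖gramSchmidtResidual 𝕜 v N x‖) 0 atTop C :=
  Antitone.tendstoUniformlyOn_of_forall_tendsto hC
    (fun N => (continuous_gramSchmidtResidual N).norm.continuousOn)
    (fun x _ => antitone_norm_gramSchmidtResidual x) continuousOn_const
    (fun _ hx => tendsto_norm_gramSchmidtResidual (hCv hx))

theorem norm_inner_sub_sum_inner_mul_inner_le (N : ℕ) (x y : E) :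
    ‖⟪x, y⟫_𝕜 - ∑ n ∈ Finset.range N, ⟪x, gramSchmidtNormed 𝕜 v n⟫_𝕜 *
        ⟪gramSchmidtNormed 𝕜 v n, y⟫_𝕜‖ ≤
      ‖gramSchmidtResidual 𝕜 v N x‖ * ‖gramSchmidtResidual 𝕜 v N y‖ := by
  rw [← inner_gramSchmidtResidual_gramSchmidtResidual]
  exact norm_inner_le_norm _ _

theorem summable_norm_inner_gramSchmidtNormed_sq (x : E) :
    Summable fun n => ‖⟪gramSchmidtNormed 𝕜 v n, x⟫_𝕜‖ ^ 2 :=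
  summable_of_sum_range_le (c := ‖x‖ ^ 2) (fun _ => by positivity) fun N => by
    linarith [norm_gramSchmidtResidual_sq (𝕜 := 𝕜) (v := v) N x,
      sq_nonneg ‖gramSchmidtResidual 𝕜 v N x‖]

theorem summable_norm_inner_mul_inner_gramSchmidtNormed (x y : E) :
    Summable fun n => ‖⟪x, gramSchmidtNormed 𝕜 v n⟫_𝕜 * ⟪gramSchmidtNormed 𝕜 v n, y⟫_𝕜‖ := by
  refine .of_nonneg_of_le (fun _ => norm_nonneg _) (fun n => ?_)
    ((summable_norm_inner_gramSchmidtNormed_sq (𝕜 := 𝕜) (v := v) x).add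
      (summable_norm_inner_gramSchmidtNormed_sq (𝕜 := 𝕜) (v := v) y))
  rw [norm_mul, norm_inner_symm]
  nlinarith [norm_nonneg ⟪gramSchmidtNormed 𝕜 v n, x⟫_𝕜,
    norm_nonneg ⟪gramSchmidtNormed 𝕜 v n, y⟫_𝕜]

theorem hasSum_inner_mul_inner_gramSchmidtNormed {x : E} (hx : x ∈ closure (range v)) (y : E) :
    HasSum (fun n => ⟪x, gramSchmidtNormed 𝕜 v n⟫_𝕜 * ⟪gramSchmidtNormed 𝕜 v n, y⟫_𝕜)
      ⟪x, y⟫_𝕜 := by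
  rw [hasSum_iff_tendsto_nat_of_summable_norm
    (summable_norm_inner_mul_inner_gramSchmidtNormed (𝕜 := 𝕜) (v := v) x y),
    tendsto_iff_norm_sub_tendsto_zero]
  refine squeeze_zero (fun _ => norm_nonneg _) (fun N => ?_)
    (by simpa using (tendsto_norm_gramSchmidtResidual (𝕜 := 𝕜) hx).mul_const ‖y‖)
  rw [norm_sub_rev]
  exact (norm_inner_sub_sum_inner_mul_inner_le N x y).trans
    (mul_le_mul_of_nonneg_left (norm_gramSchmidtResidual_le_norm y) (norm_nonneg _))

theorem tendstoUniformlyOn_sum_inner_mul_inner {C : Set E} (hC : IsCompact C)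
    (hCv : C ⊆ closure (range v)) :
    TendstoUniformlyOn (fun N (p : E × E) => ∑ n ∈ Finset.range N,
        ⟪p.1, gramSchmidtNormed 𝕜 v n⟫_𝕜 * ⟪gramSchmidtNormed 𝕜 v n, p.2⟫_𝕜)
      (fun p => ⟪p.1, p.2⟫_𝕜) atTop (C ×ˢ C) := by
  rw [Metric.tendstoUniformlyOn_iff]
  intro ε hε
  filter_upwards [Metric.tendstoUniformlyOn_iff.1
    (tendstoUniformlyOn_norm_gramSchmidtResidual (𝕜 := 𝕜) hC hCv) (√ε) (Real.sqrt_pos.2 hε)]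
    with N hN p hp
  have h1 := hN p.1 hp.1
  have h2 := hN p.2 hp.2
  simp only [Pi.zero_apply, dist_zero_left, norm_norm] at h1 h2
  calc dist _ _ ≤ ‖gramSchmidtResidual 𝕜 v N p.1‖ * ‖gramSchmidtResidual 𝕜 v N p.2‖ := by
        rw [dist_eq_norm]; exact norm_inner_sub_sum_inner_mul_inner_le N p.1 p.2
    _ < √ε * √ε := mul_lt_mul'' h1 h2 (norm_nonneg _) (norm_nonneg _)
    _ = ε := Real.mul_self_sqrt hε.le

end GramSchmidtResidual

theorem exists_seq_dense_subset {X : Type*} [TopologicalSpace X] {s : Set X}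
    [TopologicalSpace.SeparableSpace s] (hs : s.Nonempty) :
    ∃ μ : ℕ → X, (∀ n, μ n ∈ s) ∧ s ⊆ closure (range μ) := by
  have := hs.to_subtype
  obtain ⟨u, hu⟩ := TopologicalSpace.exists_dense_seq s
  refine ⟨Subtype.val ∘ u, fun n => (u n).2, fun x hx => ?_⟩
  rw [range_comp]
  exact IsInducing.subtypeVal.dense_iff.1 hu ⟨x, hx⟩

theorem image_subset_closure_range_comp {X Y : Type*} [TopologicalSpace X] [TopologicalSpace Y]
    {k : X → Y} {A : Set X} (hk : ContinuousOn k A) {μ : ℕ → X} (hμA : ∀ n, μ n ∈ A)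
    (hμ : A ⊆ closure (range μ)) : k '' A ⊆ closure (range (k ∘ μ)) := by
  rintro _ ⟨x, hx, rfl⟩
  rw [range_comp]
  exact ((hk x hx).mono (range_subset_iff.2 hμA)).mem_closure_image (hμ hx)

section PullBack

variable {𝕜 E X : Type*} [RCLike 𝕜] [NormedAddCommGroup E] [InnerProductSpace 𝕜 E]
  [TopologicalSpace X] {k : X → E} {A : Set X}

theorem continuousOn_of_continuousOn_inner
    (h : ContinuousOn (fun p : X × X => ⟪k p.1, k p.2⟫_𝕜) (A ×ˢ A)) : ContinuousOn k A := by
  intro x hx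
  have hdiag : ContinuousWithinAt (fun y => ⟪k y, k y⟫_𝕜) A x :=
    (h (x, x) ⟨hx, hx⟩).comp (f := fun y => (y, y))
      (continuousWithinAt_id.prodMk continuousWithinAt_id)
      fun y hy => ⟨hy, hy⟩
  have hleft : ContinuousWithinAt (fun y => ⟪k y, k x⟫_𝕜) A x :=
    (h (x, x) ⟨hx, hx⟩).comp (f := fun y => (y, x))
      (continuousWithinAt_id.prodMk continuousWithinAt_const)
      fun y hy => ⟨hy, hx⟩
  have hsq : ContinuousWithinAt (fun y => ‖k y - k x‖ ^ 2) A x := by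
    simp_rw [@norm_sub_sq 𝕜, ← inner_self_eq_norm_sq (𝕜 := 𝕜)]
    exact ((RCLike.continuous_re.continuousAt.comp_continuousWithinAt hdiag).sub
      ((RCLike.continuous_re.continuousAt.comp_continuousWithinAt hleft).const_mul 2)).add
      continuousWithinAt_const
  refine tendsto_iff_norm_sub_tendsto_zero.2 ?_
  simpa using hsq.tendsto.sqrt

theorem tendstoUniformlyOn_sum_inner_comp_mul_inner_comp {v : ℕ → E} (hk : ContinuousOn k A)
    (hkv : k '' A ⊆ closure (range v)) {K : Set (X × X)} (hKA : K ⊆ A ×ˢ A)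
    (hK : IsCompact K) :
    TendstoUniformlyOn (fun N (p : X × X) => ∑ n ∈ Finset.range N,
        ⟪k p.1, gramSchmidtNormed 𝕜 v n⟫_𝕜 * ⟪gramSchmidtNormed 𝕜 v n, k p.2⟫_𝕜)
      (fun p => ⟪k p.1, k p.2⟫_𝕜) atTop K := by
  set L := Prod.fst '' K ∪ Prod.snd '' K
  have hLA : L ⊆ A := union_subset (image_subset_iff.2 fun p hp => (hKA hp).1)
    (image_subset_iff.2 fun p hp => (hKA hp).2)
  have hkL : IsCompact (k '' L) :=
    ((hK.image continuous_fst).union (hK.image continuous_snd)).image_of_continuousOn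
      (hk.mono hLA)
  refine ((tendstoUniformlyOn_sum_inner_mul_inner hkL
    ((image_mono hLA).trans hkv)).comp fun p : X × X => (k p.1, k p.2)).mono fun p hp => ?_
  exact ⟨mem_image_of_mem k (.inl (mem_image_of_mem _ hp)),
    mem_image_of_mem k (.inr (mem_image_of_mem _ hp))⟩

end PullBack

theorem differentiableOn_inner_of_mem_span {E F : Type*} [NormedAddCommGroup E]
    [InnerProductSpace ℂ E] [NormedAddCommGroup F] [NormedSpace ℂ F] {k : F → E} {s : Set F}
    {S : Set E} (hS : ∀ w ∈ S, DifferentiableOn ℂ (fun z => ⟪k z, w⟫_ℂ) s) {w : E}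
    (hw : w ∈ span ℂ S) : DifferentiableOn ℂ (fun z => ⟪k z, w⟫_ℂ) s := by
  induction hw using Submodule.span_induction with
  | mem w hw => exact hS w hw
  | zero => simp
  | add w w' _ _ hw hw' => exact (hw.add hw').congr fun z _ => inner_add_right _ _ _
  | smul c w _ hw => exact (hw.const_mul c).congr fun z _ => inner_smul_right _ _ _

def IsHereditaryOn (A : Set ℂ) (U : ℂ → ℂ → ℂ) : Prop :=
  DifferentiableOn ℂ (fun p : ℂ × ℂ => U p.1 (conj p.2)) (A ×ˢ A)

namespace IsHereditaryOn

variable {A : Set ℂ} {U : ℂ → ℂ → ℂ}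

theorem continuousOn (hU : IsHereditaryOn A U) (hA : ∀ z ∈ A, conj z ∈ A) :
    ContinuousOn (fun p : ℂ × ℂ => U p.1 p.2) (A ×ˢ A) := by
  simpa [Function.comp_def] using (DifferentiableOn.continuousOn hU).comp
    (continuous_fst.prodMk (continuous_conj.comp continuous_snd)).continuousOn
    fun p (hp : p ∈ A ×ˢ A) => ⟨hp.1, hA _ hp.2⟩

theorem differentiableOn_left (hU : IsHereditaryOn A U) (hA : ∀ z ∈ A, conj z ∈ A) {m : ℂ}
    (hm : m ∈ A) : DifferentiableOn ℂ (U · m) A := by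
  simpa [Function.comp_def] using
    hU.comp (differentiableOn_id.prodMk (differentiableOn_const (conj m))) fun l hl => ⟨hl, hA _ hm⟩

end IsHereditaryOn

theorem conj_mem_annulus {r : ℝ} {z : ℂ} (hz : z ∈ annulus r) : conj z ∈ annulus r := by
  simpa [annulus] using hz

theorem annulus_nonempty {r : ℝ} (hr0 : 0 < r) (hr1 : r < 1) : (annulus r).Nonempty :=
  ⟨((r + 1) / 2 : ℝ), by
    refine ⟨?_, ?_⟩ <;> rw [Complex.norm_real, Real.norm_of_nonneg (by linarith)] <;> linarith⟩

/-- Every positive semi-definite hereditary function `U` on `A_r` factors as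
`U(λ,μ) = ∑ₙ fₙ(λ) conj(fₙ(μ))` with `fₙ` holomorphic on `A_r`, the series
converging uniformly on compact subsets of `A_r × A_r`. -/
theorem hereditary_psd_factorization (r : ℝ) (hr0 : 0 < r) (hr1 : r < 1)
    (U : ℂ → ℂ → ℂ)
    (hher : DifferentiableOn ℂ (fun p : ℂ × ℂ => U p.1 (conj p.2))
      ((annulus r) ×ˢ (annulus r)))
    (hpsd : IsPosSemidefOn (annulus r) U) :
    ∃ f : ℕ → ℂ → ℂ, (∀ n, DifferentiableOn ℂ (f n) (annulus r)) ∧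
      (∀ l ∈ annulus r, ∀ m ∈ annulus r,
        HasSum (fun n : ℕ => f n l * conj (f n m)) (U l m)) ∧
      ∀ K ⊆ (annulus r) ×ˢ (annulus r), IsCompact K →
        TendstoUniformlyOn
          (fun (N : ℕ) (p : ℂ × ℂ) => ∑ n ∈ Finset.range N, f n p.1 * conj (f n p.2))
          (fun p => U p.1 p.2) Filter.atTop K := by
  obtain ⟨E, _, _, k, hk⟩ := hpsd.exists_inner_eq
  have hkA : ContinuousOn k (annulus r) := continuousOn_of_continuousOn_inner (𝕜 := ℂ) <|
    (IsHereditaryOn.continuousOn hher fun _ => conj_mem_annulus).congr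
      fun p hp => hk _ hp.1 _ hp.2
  obtain ⟨μ, hμA, hμ⟩ := exists_seq_dense_subset (annulus_nonempty hr0 hr1)
  have hkμ := image_subset_closure_range_comp hkA hμA hμ
  refine ⟨fun n l => ⟪k l, gramSchmidtNormed ℂ (k ∘ μ) n⟫_ℂ, fun n => ?_,
    fun l hl m hm => ?_, fun K hK hKc => ?_⟩
  · refine differentiableOn_inner_of_mem_span (S := range (k ∘ μ)) ?_ ?_
    · rintro _ ⟨j, rfl⟩
      exact (IsHereditaryOn.differentiableOn_left hher (fun _ => conj_mem_annulus)
        (hμA j)).congr fun l hl => hk l hl _ (hμA j)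
    · rw [← span_gramSchmidt ℂ, ← span_gramSchmidtNormed_range]
      exact subset_span ⟨n, rfl⟩
  · simpa only [inner_conj_symm, hk l hl m hm] using
      hasSum_inner_mul_inner_gramSchmidtNormed (𝕜 := ℂ) (hkμ ⟨l, hl, rfl⟩) (k m)
  · simp only [inner_conj_symm]
    exact (tendstoUniformlyOn_sum_inner_comp_mul_inner_comp hkA hkμ hK hKc).congr_right
      fun p hp => hk _ (hK hp).1 _ (hK hp).2

end
end

section
/- Let 0 < r < 1, let H be a complex Hilbert space, and let T be an invertible bounded operator on H satisfying r²·T⁻¹(T⁻¹)* + T·T* ≤ (r²+1)·I. Then r²·I ≤ T·T* ≤ I (equivalently ‖T‖ ≤ 1 and ‖r·T⁻¹‖ ≤ 1), and consequently the spectrum of T is contained in the closed annulus {z ∈ ℂ : r ≤ |z| ≤ 1}. -/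
open Complex ComplexConjugate ContinuousLinearMap
open scoped ComplexOrder

noncomputable section

/-! The hypothesis involves both `TT*` and `T⁻¹(T⁻¹)* = (T*T)⁻¹`, so it is not a spectral
condition on a single positive operator. Instead, with `A = T*` and `B = (T⁻¹)*` it reads
`r²‖By‖² + ‖Ay‖² ≤ (r²+1)‖y‖²`. Along the orbits `Bⁿz` and `Aⁿy` this is a second-order
recurrence inequality for the squared norms with characteristic roots `1` and `r²`; a nonnegative
sequence obeying it can neither start by decreasing (along `Bⁿz`) nor start by shrinking faster
than the factor `r²` (along `Aⁿy`), since the initial gap would persist and drive the sequence below zero. Hence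
`‖T‖ = ‖A‖ ≤ 1` and `‖rT⁻¹‖ ≤ 1`; the operator inequalities follow in the C*-algebra of
operators, and the annulus from `σ(T⁻¹) = σ(T)⁻¹`. -/

lemma nonpos_of_forall_succ_le_sub {u : ℕ → ℝ} {δ : ℝ} (hu : ∀ n, 0 ≤ u n)
    (h : ∀ n, u (n + 1) ≤ u n - δ) : δ ≤ 0 := by
  by_contra! hδ
  have hlin : ∀ n : ℕ, u n ≤ u 0 - n * δ := by
    intro n
    induction n with
    | zero => simp
    | succ n ih => push_cast; linarith [h n]
  obtain ⟨n, hn⟩ := exists_nat_gt (u 0 / δ)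
  rw [div_lt_iff₀ hδ] at hn
  linarith [hlin n, hu n]

lemma le_succ_of_mul_add_le {u : ℕ → ℝ} {c : ℝ} (hc0 : 0 ≤ c) (hc1 : c ≤ 1)
    (hu : ∀ n, 0 ≤ u n) (h : ∀ n, c * u (n + 2) + u n ≤ (c + 1) * u (n + 1)) : u 0 ≤ u 1 := by
  by_contra! h10
  -- `h n` reads `u n - u (n + 1) ≤ c * (u (n + 1) - u (n + 2))`: positive decrements never shrink.
  have hgap : ∀ n, u 0 - u 1 ≤ u n - u (n + 1) := by
    intro n
    induction n with
    | zero => exact le_rfl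
    | succ n ih =>
      have hn := h n
      have hpos : 0 < u (n + 1) - u (n + 2) := by nlinarith
      nlinarith
  linarith [nonpos_of_forall_succ_le_sub hu (δ := u 0 - u 1) fun n => by linarith [hgap n]]

lemma mul_le_succ_of_mul_add_le {u : ℕ → ℝ} {c : ℝ} (hc1 : c ≤ 1)
    (hu : ∀ n, 0 ≤ u n) (h : ∀ n, c * u n + u (n + 2) ≤ (c + 1) * u (n + 1)) :
    c * u 0 ≤ u 1 := by
  by_contra! h10
  -- `h n` reads `u (n + 2) - c * u (n + 1) ≤ u (n + 1) - c * u n`.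
  have hgap : ∀ n, u (n + 1) - c * u n ≤ u 1 - c * u 0 := by
    intro n
    induction n with
    | zero => exact le_rfl
    | succ n ih => linarith [h n]
  linarith [nonpos_of_forall_succ_le_sub hu (δ := c * u 0 - u 1) fun n => by
    nlinarith [hgap n, mul_nonneg (sub_nonneg.2 hc1) (hu n)]]

section InversePair

variable {E : Type*} {A B : E → E} {q : E → ℝ} {c : ℝ}

lemma map_le_of_weighted_bound (hc0 : 0 ≤ c) (hc1 : c ≤ 1) (hAB : Function.LeftInverse A B)
    (hBA : Function.LeftInverse B A) (hq : ∀ y, 0 ≤ q y)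
    (h : ∀ y, c * q (B y) + q (A y) ≤ (c + 1) * q y) (y : E) : q (A y) ≤ q y := by
  have key := le_succ_of_mul_add_le (u := fun n => q (B^[n] (A y))) hc0 hc1 (fun _ => hq _)
    fun n => by
      simpa only [Function.iterate_succ_apply', hAB _] using h (B^[n + 1] (A y))
  simpa [hBA y] using key

lemma mul_le_map_of_weighted_bound (hc1 : c ≤ 1) (hBA : Function.LeftInverse B A)
    (hq : ∀ y, 0 ≤ q y) (h : ∀ y, c * q (B y) + q (A y) ≤ (c + 1) * q y) (y : E) :
    c * q y ≤ q (A y) := by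
  have key := mul_le_succ_of_mul_add_le (u := fun n => q (A^[n] y)) hc1 (fun _ => hq _)
    fun n => by
      simpa only [Function.iterate_succ_apply', hBA _] using h (A^[n + 1] y)
  simpa using key

end InversePair

lemma norm_le_one_and_norm_smul_le_one_of_weighted_bound {𝕜 E : Type*} [RCLike 𝕜]
    [NormedAddCommGroup E] [NormedSpace 𝕜 E] {A B : E →L[𝕜] E} (hAB : A * B = 1)
    (hBA : B * A = 1) {r : ℝ} (hr : r ^ 2 ≤ 1)
    (h : ∀ y, r ^ 2 * ‖B y‖ ^ 2 + ‖A y‖ ^ 2 ≤ (r ^ 2 + 1) * ‖y‖ ^ 2) :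
    ‖A‖ ≤ 1 ∧ ‖(r : 𝕜) • B‖ ≤ 1 := by
  have hAB' : Function.LeftInverse A B := fun y => congr($hAB y)
  have hBA' : Function.LeftInverse B A := fun y => congr($hBA y)
  have hq : ∀ y : E, 0 ≤ ‖y‖ ^ 2 := fun _ => by positivity
  refine ⟨A.opNorm_le_bound zero_le_one fun y => ?_, opNorm_le_bound _ zero_le_one fun y => ?_⟩
  · have := map_le_of_weighted_bound (sq_nonneg r) hr hAB' hBA' hq h y
    rw [one_mul]
    exact pow_le_pow_iff_left₀ (norm_nonneg _) (norm_nonneg _) two_ne_zero |>.1 this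
  · have := mul_le_map_of_weighted_bound hr hBA' hq h (B y)
    rw [hAB' y, ← sq_abs r, ← mul_pow] at this
    simpa [norm_smul] using
      pow_le_pow_iff_left₀ (by positivity) (norm_nonneg _) two_ne_zero |>.1 this

namespace opCond

variable {r : ℝ} {H : Type*} [NormedAddCommGroup H] [InnerProductSpace ℂ H] [CompleteSpace H]
  {T Tinv : H →L[ℂ] H}

lemma weighted_bound (hop : opCond r T Tinv) (y : H) :
    r ^ 2 * ‖adjoint Tinv y‖ ^ 2 + ‖adjoint T y‖ ^ 2 ≤ (r ^ 2 + 1) * ‖y‖ ^ 2 := by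
  have hnorm (S : H →L[ℂ] H) : inner ℂ ((S * adjoint S) y) y = (‖adjoint S y‖ ^ 2 : ℂ) :=
    (adjoint_inner_right S (adjoint S y) y).symm.trans (inner_self_eq_norm_sq_to_K _)
  have := hop.re_inner_nonneg_left y
  simp only [sub_apply, add_apply, smul_apply, inner_sub_left, inner_add_left,
    inner_smul_left, hnorm] at this
  simpa [inner_self_eq_norm_sq_to_K, ← ofReal_pow] using this

end opCond

section CStarAlgebra

variable {A : Type*} [CStarAlgebra A] [PartialOrder A] [StarOrderedRing A]

lemma mul_star_le_one_of_norm_le_one {a : A} (ha : ‖a‖ ≤ 1) : a * star a ≤ 1 := by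
  refine (CStarAlgebra.norm_le_one_iff_of_nonneg _).1 ?_
  rw [CStarRing.norm_self_mul_star]
  nlinarith [norm_nonneg a]

lemma sq_smul_one_le_mul_star {a b : A} (hab : a * b = 1) {r : ℝ} (hb : ‖(r : ℂ) • b‖ ≤ 1) :
    (r : ℂ) ^ 2 • 1 ≤ a * star a := by
  calc (r : ℂ) ^ 2 • 1 = (r : ℂ) ^ 2 • ((a * b) * star (a * b)) := by
        rw [hab, star_one, mul_one]
    _ = a * ((r : ℂ) • b * star ((r : ℂ) • b)) * star a := by
        simp [star_smul, star_mul, mul_assoc, sq, smul_smul, ← ofReal_mul]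
    _ ≤ a * 1 * star a := star_right_conjugate_le_conjugate (mul_star_le_one_of_norm_le_one hb) a
    _ = a * star a := by rw [mul_one]

end CStarAlgebra

lemma spectrum_subset_closedAnnulus {A : Type*} [NormedRing A] [NormedAlgebra ℂ A]
    [CompleteSpace A] (hA : ‖(1 : A)‖ ≤ 1) {a b : A} (hab : a * b = 1) (hba : b * a = 1)
    {r : ℝ} (ha : ‖a‖ ≤ 1) (hb : ‖(r : ℂ) • b‖ ≤ 1) :
    spectrum ℂ a ⊆ {z : ℂ | r ≤ ‖z‖ ∧ ‖z‖ ≤ 1} := by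
  intro z hz
  let u : Aˣ := ⟨a, b, hab, hba⟩
  have hz0 : 0 < ‖z‖ := norm_pos_iff.2 fun h => u.zero_notMem_spectrum ℂ (h ▸ hz)
  have hinv : z⁻¹ ∈ spectrum ℂ b := spectrum.inv₀_mem_inv_iff (a := u) |>.2 hz
  refine ⟨?_, ?_⟩
  · have hzb : ‖z‖⁻¹ ≤ ‖b‖ := by
      simpa using (spectrum.norm_le_norm_mul_of_mem hinv).trans
        (mul_le_of_le_one_right (norm_nonneg b) hA)
    have hrb : r * ‖b‖ ≤ 1 := by
      calc r * ‖b‖ ≤ |r| * ‖b‖ := by gcongr; exact le_abs_self r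
        _ = ‖(r : ℂ) • b‖ := by simp [norm_smul]
        _ ≤ 1 := hb
    by_contra! hlt
    have hr : 0 < r := hz0.trans hlt
    have : 1 < r * ‖b‖ := calc
      1 = r * r⁻¹ := (mul_inv_cancel₀ hr.ne').symm
      _ < r * ‖z‖⁻¹ := by gcongr
      _ ≤ r * ‖b‖ := by gcongr
    linarith
  · calc ‖z‖ ≤ ‖a‖ * ‖(1 : A)‖ := spectrum.norm_le_norm_mul_of_mem hz
      _ ≤ 1 := mul_le_one₀ ha (norm_nonneg _) hA

/-- If `r²T⁻¹(T⁻¹)* + TT* ≤ (r²+1)I`, then `r²·I ≤ TT* ≤ I` (equivalently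
`‖T‖ ≤ 1` and `‖rT⁻¹‖ ≤ 1`), and the spectrum of `T` lies in the closed annulus
`{r ≤ |z| ≤ 1}`. -/
theorem opCond_implies_closed_annulus (r : ℝ) (hr0 : 0 < r) (hr1 : r < 1)
    (H : Type) [NormedAddCommGroup H] [InnerProductSpace ℂ H] [CompleteSpace H]
    (T Tinv : H →L[ℂ] H) (h1 : T * Tinv = 1) (h2 : Tinv * T = 1)
    (hop : opCond r T Tinv) :
    (T * ContinuousLinearMap.adjoint T - (r : ℂ) ^ 2 • 1).IsPositive ∧
    ((1 : H →L[ℂ] H) - T * ContinuousLinearMap.adjoint T).IsPositive ∧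
    ‖T‖ ≤ 1 ∧ ‖(r : ℂ) • Tinv‖ ≤ 1 ∧
    spectrum ℂ T ⊆ {z : ℂ | r ≤ ‖z‖ ∧ ‖z‖ ≤ 1} := by
  have hstar₁ : star T * star Tinv = 1 := by rw [← star_mul, h2, star_one]
  have hstar₂ : star Tinv * star T = 1 := by rw [← star_mul, h1, star_one]
  obtain ⟨hT', hTinv'⟩ := norm_le_one_and_norm_smul_le_one_of_weighted_bound hstar₁ hstar₂
    (by nlinarith) hop.weighted_bound
  have hT : ‖T‖ ≤ 1 := by rwa [norm_star] at hT'
  have hTinv : ‖(r : ℂ) • Tinv‖ ≤ 1 := by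
    rwa [← norm_star, star_smul, Complex.star_def, conj_ofReal]
  exact ⟨sq_smul_one_le_mul_star h1 hTinv, mul_star_le_one_of_norm_le_one hT, hT, hTinv,
    spectrum_subset_closedAnnulus norm_id_le h1 h2 hT hTinv⟩

end
end

section
/- Let 0 < r < 1. The kernel k_{A_r}(λ,μ) = (1−r²)/((1−λ·conj(μ))·(1−r²/(λ·conj(μ)))) is positive semi-definite on the annulus A_r: for all finitely many points λ_1,…,λ_n ∈ A_r and scalars w_1,…,w_n ∈ ℂ, the sum ∑_{i,j} k_{A_r}(λ_j, λ_i)·w_i·conj(w_j) is a nonnegative real number. -/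
open Complex ComplexConjugate ContinuousLinearMap
open scoped ComplexOrder

noncomputable section

/-! Put `X = λ μ̄` and `Y = (r/λ)·conj(r/μ) = r²/(λ μ̄)`; both have modulus `< 1` on `A_r`, and
partial fractions give `k_{A_r}(λ, μ) = 1 + X/(1-X) + Y/(1-Y)`. Each `X/(1-X) = ∑_{m ≥ 1} λᵐ·conj(μᵐ)`
is a convergent sum of rank-one kernels `f(λ)·conj(f(μ))`, which are positive semi-definite, and
positive semi-definiteness survives sums and pointwise limits because the order on `ℂ` is closed. -/

namespace IsPosSemidefOn

variable {X : Type*} {A : Set X}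

theorem congr {k k' : X → X → ℂ} (hk : IsPosSemidefOn A k)
    (h : ∀ x ∈ A, ∀ y ∈ A, k x y = k' x y) : IsPosSemidefOn A k' := by
  intro n x hx w
  simpa only [h _ (hx _) _ (hx _)] using hk n x hx w

theorem add {k k' : X → X → ℂ} (hk : IsPosSemidefOn A k) (hk' : IsPosSemidefOn A k') :
    IsPosSemidefOn A (fun x y => k x y + k' x y) := by
  intro n x hx w
  simpa only [add_mul, Finset.sum_add_distrib] using add_nonneg (hk n x hx w) (hk' n x hx w)

theorem of_hasSum {ι : Type*} {k : ι → X → X → ℂ} {K : X → X → ℂ}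
    (hk : ∀ m, IsPosSemidefOn A (k m)) (hK : ∀ x ∈ A, ∀ y ∈ A, HasSum (fun m => k m x y) (K x y)) :
    IsPosSemidefOn A K := by
  intro n x hx w
  have hQ : HasSum (fun m => ∑ i, ∑ j, k m (x j) (x i) * w i * conj (w j))
      (∑ i, ∑ j, K (x j) (x i) * w i * conj (w j)) := hasSum_sum fun i _ => hasSum_sum fun j _ =>
    ((hK _ (hx j) _ (hx i)).mul_right (w i)).mul_right (conj (w j))
  exact hQ.nonneg fun m => hk m n x hx w

end IsPosSemidefOn

theorem isPosSemidefOn_mul_conj {X : Type*} (A : Set X) (f : X → ℂ) :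
    IsPosSemidefOn A (fun x y => f x * conj (f y)) := by
  intro n x _ w
  set s := ∑ i, conj (f (x i)) * w i
  have hs : ∑ i, ∑ j, f (x j) * conj (f (x i)) * w i * conj (w j) = conj s * s := by
    rw [map_sum, Finset.sum_mul_sum, Finset.sum_comm]
    simp only [map_mul, conj_conj]
    exact Finset.sum_congr rfl fun i _ => Finset.sum_congr rfl fun j _ => by ring
  rw [hs]
  exact star_mul_self_nonneg s

theorem norm_mul_conj_lt_one {a b : ℂ} (ha : ‖a‖ < 1) (hb : ‖b‖ < 1) : ‖a * conj b‖ < 1 := by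
  rw [norm_mul, Complex.norm_conj]
  exact mul_lt_one_of_nonneg_of_lt_one_left (norm_nonneg _) ha hb.le

theorem one_sub_mul_conj_ne_zero {a b : ℂ} (ha : ‖a‖ < 1) (hb : ‖b‖ < 1) : 1 - a * conj b ≠ 0 :=
  sub_ne_zero.mpr fun h => (norm_mul_conj_lt_one ha hb).ne (by rw [← h, norm_one])

theorem isPosSemidefOn_mul_conj_div_one_sub {X : Type*} {A : Set X} {f : X → ℂ}
    (hf : ∀ x ∈ A, ‖f x‖ < 1) :
    IsPosSemidefOn A (fun x y => f x * conj (f y) / (1 - f x * conj (f y))) := by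
  refine IsPosSemidefOn.of_hasSum (fun m => isPosSemidefOn_mul_conj A fun x => f x ^ (m + 1)) ?_
  intro x hx y hy
  have hterm : (fun m : ℕ => f x ^ (m + 1) * conj (f y ^ (m + 1)))
      = fun m => f x * conj (f y) * (f x * conj (f y)) ^ m := by
    ext m
    rw [map_pow, ← mul_pow, pow_succ']
  rw [hterm, div_eq_mul_inv]
  exact (hasSum_geometric_of_norm_lt_one (norm_mul_conj_lt_one (hf x hx) (hf y hy))).mul_left _

theorem kAnn_eq_partial_fractions {r : ℝ} {l m : ℂ} (hl : l ≠ 0) (hm : m ≠ 0)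
    (h1 : 1 - l * conj m ≠ 0) (h2 : 1 - r / l * conj (r / m) ≠ 0) :
    kAnn r l m = 1 + l * conj m / (1 - l * conj m)
      + r / l * conj (r / m) / (1 - r / l * conj (r / m)) := by
  have hm_conj : conj m ≠ 0 := (map_ne_zero _).mpr hm
  rw [map_div₀, conj_ofReal] at h2 ⊢
  have hden : l * conj m - r ^ 2 ≠ 0 := by
    contrapose! h2
    field_simp
    linear_combination h2
  unfold kAnn
  field_simp
  ring

theorem kAnn_posSemidef_general (r : ℝ) (hr0 : 0 < r) :
    IsPosSemidefOn (annulus r) (kAnn r) := by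
  have hnorm_lt : ∀ z ∈ annulus r, ‖z‖ < 1 := fun z hz => hz.2
  have hnorm_div_lt : ∀ z ∈ annulus r, ‖(r : ℂ) / z‖ < 1 := fun z hz => by
    rw [norm_div, norm_real, Real.norm_of_nonneg hr0.le, div_lt_one (hr0.trans hz.1)]
    exact hz.1
  refine (((isPosSemidefOn_mul_conj _ fun _ => 1).add
    (isPosSemidefOn_mul_conj_div_one_sub (f := fun z => z) hnorm_lt)).add
    (isPosSemidefOn_mul_conj_div_one_sub hnorm_div_lt)).congr fun l hl m hm => ?_
  have hne : ∀ z ∈ annulus r, z ≠ 0 := fun z hz => norm_pos_iff.mp (hr0.trans hz.1)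
  rw [kAnn_eq_partial_fractions (hne l hl) (hne m hm)
    (one_sub_mul_conj_ne_zero (hnorm_lt l hl) (hnorm_lt m hm))
    (one_sub_mul_conj_ne_zero (hnorm_div_lt l hl) (hnorm_div_lt m hm))]
  simp

/-- The kernel `k_{A_r}` is positive semi-definite on the annulus `A_r`. -/
theorem kAnn_posSemidef (r : ℝ) (hr0 : 0 < r) (hr1 : r < 1) :
    IsPosSemidefOn (annulus r) (kAnn r) :=
  kAnn_posSemidef_general r hr0

end
end

section
/- Let 0 < r < 1 and let A be the 2×2 complex matrix A = [[√r, 1−r],[0, √r]]. Then ‖A‖ = 1 and ‖r·A⁻¹‖ = 1 (operator norms on ℂ²), so r²·I ≤ A·A* ≤ I; yet the inequality r²·A⁻¹(A⁻¹)* + A·A* ≤ (r²+1)·I fails: for v = (1, √r) one has ⟨((r²+1)·I − r²·A⁻¹(A⁻¹)* − A·A*)v, v⟩ = r²·(r + 1 − 1/r − (2 − 1/r)²) < 0. -/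
/-!
Write `s = √r`. Both `A` and `r • A⁻¹` are upper triangular Toeplitz matrices
`M = [[s, ±(1 - s²)], [0, s]]`. For such `M`, `1 - M Mᴴ` and `M Mᴴ - s⁴` are `(1 - s²)` times
rank-one positive matrices, so `r² ≤ A Aᴴ ≤ 1`, and by the C⋆-identity `‖M‖² = ‖M Mᴴ‖` this gives
`‖M‖ ≤ 1`; equality holds because `M` maps `(s, ±1)` isometrically to `(1, ±s)`. The off-diagonal
entries cancel in `r² A⁻¹ A⁻ᴴ + A Aᴴ`, leaving the defect `diag(-(1 - r)², (1 - r)²)`, whose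
quadratic form at `(1, s)` is `(r - 1)³ < 0`.
-/

open Matrix
open scoped ComplexOrder

noncomputable section

def Amat (r : ℝ) : Matrix (Fin 2) (Fin 2) ℂ :=
  !![((Real.sqrt r : ℝ) : ℂ), ((1 - r : ℝ) : ℂ); 0, ((Real.sqrt r : ℝ) : ℂ)]

open scoped Matrix.Norms.L2Operator MatrixOrder in
theorem Matrix.norm_toEuclideanCLM_le_one_iff {n : Type*} [Fintype n] [DecidableEq n]
    (M : Matrix n n ℂ) : ‖toEuclideanCLM (𝕜 := ℂ) M‖ ≤ 1 ↔ (1 - M * Mᴴ).PosSemidef := by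
  rw [← cstar_norm_def, ← sq_le_one_iff₀ (norm_nonneg _), sq, ← CStarRing.norm_self_mul_star,
    CStarAlgebra.norm_le_one_iff_of_nonneg (M * star M) (mul_star_self_nonneg M)]
  rfl

theorem ContinuousLinearMap.one_le_opNorm_of_norm_apply_eq {𝕜 E F : Type*}
    [NontriviallyNormedField 𝕜] [NormedAddCommGroup E] [NormedSpace 𝕜 E] [NormedAddCommGroup F]
    [NormedSpace 𝕜 F] (f : E →L[𝕜] F) {x : E} (hx : x ≠ 0) (h : ‖f x‖ = ‖x‖) : 1 ≤ ‖f‖ := by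
  simpa [h, div_self (norm_ne_zero_iff.mpr hx)] using f.ratio_le_opNorm x

def upperToeplitz (s t : ℝ) : Matrix (Fin 2) (Fin 2) ℂ :=
  !![(s : ℂ), (t : ℂ); 0, (s : ℂ)]

theorem upperToeplitz_mul_upperToeplitz_neg (s t : ℝ) :
    upperToeplitz s t * upperToeplitz s (-t) = ((s : ℂ) ^ 2) • 1 := by
  ext i j
  fin_cases i <;> fin_cases j <;> simp [upperToeplitz, sq, mul_comm]

theorem inv_upperToeplitz {s : ℝ} (hs : s ≠ 0) (t : ℝ) :
    (upperToeplitz s t)⁻¹ = ((s : ℂ) ^ 2)⁻¹ • upperToeplitz s (-t) := by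
  refine inv_eq_right_inv ?_
  rw [mul_smul_comm, upperToeplitz_mul_upperToeplitz_neg, smul_smul,
    inv_mul_cancel₀ (by exact_mod_cast pow_ne_zero 2 hs), one_smul]

theorem upperToeplitz_mul_conjTranspose (s t : ℝ) :
    upperToeplitz s t * (upperToeplitz s t)ᴴ =
      !![(s : ℂ) ^ 2 + (t : ℂ) ^ 2, (s : ℂ) * t; (s : ℂ) * t, (s : ℂ) ^ 2] := by
  ext i j
  fin_cases i <;> fin_cases j <;>
    simp [upperToeplitz, mul_apply, -cons_mul, Fin.sum_univ_two, conjTranspose_apply, sq, mul_comm]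

theorem one_sub_upperToeplitz_mul_conjTranspose (s σ : ℝ) (hσ : σ ^ 2 = 1) :
    1 - upperToeplitz s (σ * (1 - s ^ 2)) * (upperToeplitz s (σ * (1 - s ^ 2)))ᴴ =
      (1 - s ^ 2) • vecMulVec ![(s : ℂ), -σ] (star ![(s : ℂ), -σ]) := by
  have hσ' : (σ : ℂ) ^ 2 = 1 := by exact_mod_cast hσ
  rw [upperToeplitz_mul_conjTranspose]
  ext i j
  fin_cases i <;> fin_cases j <;> simp [vecMulVec, one_apply] <;> grind

theorem upperToeplitz_mul_conjTranspose_sub (s σ : ℝ) (hσ : σ ^ 2 = 1) :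
    upperToeplitz s (σ * (1 - s ^ 2)) * (upperToeplitz s (σ * (1 - s ^ 2)))ᴴ - ((s : ℂ) ^ 4) • 1 =
      (1 - s ^ 2) • vecMulVec ![1, (σ * s : ℂ)] (star ![1, (σ * s : ℂ)]) := by
  have hσ' : (σ : ℂ) ^ 2 = 1 := by exact_mod_cast hσ
  rw [upperToeplitz_mul_conjTranspose]
  ext i j
  fin_cases i <;> fin_cases j <;> simp [vecMulVec, one_apply] <;> grind

theorem posSemidef_one_sub_upperToeplitz_mul_conjTranspose {s σ : ℝ} (hs : s ^ 2 ≤ 1)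
    (hσ : σ ^ 2 = 1) :
    (1 - upperToeplitz s (σ * (1 - s ^ 2)) * (upperToeplitz s (σ * (1 - s ^ 2)))ᴴ).PosSemidef := by
  rw [one_sub_upperToeplitz_mul_conjTranspose s σ hσ]
  exact (posSemidef_vecMulVec_self_star _).smul (sub_nonneg.mpr hs)

theorem posSemidef_upperToeplitz_mul_conjTranspose_sub {s σ : ℝ} (hs : s ^ 2 ≤ 1)
    (hσ : σ ^ 2 = 1) :
    (upperToeplitz s (σ * (1 - s ^ 2)) * (upperToeplitz s (σ * (1 - s ^ 2)))ᴴ -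
      ((s : ℂ) ^ 4) • 1).PosSemidef := by
  rw [upperToeplitz_mul_conjTranspose_sub s σ hσ]
  exact (posSemidef_vecMulVec_self_star _).smul (sub_nonneg.mpr hs)

theorem norm_toEuclideanCLM_upperToeplitz {s σ : ℝ} (hs : s ^ 2 ≤ 1) (hσ : σ ^ 2 = 1) :
    ‖toEuclideanCLM (𝕜 := ℂ) (upperToeplitz s (σ * (1 - s ^ 2)))‖ = 1 := by
  refine le_antisymm ?_ ?_
  · exact (norm_toEuclideanCLM_le_one_iff _).mpr
      (posSemidef_one_sub_upperToeplitz_mul_conjTranspose hs hσ)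
  refine ContinuousLinearMap.one_le_opNorm_of_norm_apply_eq _ (x := !₂[(s : ℂ), σ]) ?_ ?_
  · intro h
    have hσ0 : σ = 0 := by simpa using congrArg (· 1) h
    simp [hσ0] at hσ
  · have hσ' : (σ : ℂ) ^ 2 = 1 := by exact_mod_cast hσ
    have hMx : upperToeplitz s (σ * (1 - s ^ 2)) *ᵥ ![(s : ℂ), σ] = ![1, (s * σ : ℂ)] := by
      ext i
      fin_cases i <;> simp [upperToeplitz] <;> grind
    rw [toEuclideanCLM_toLp, hMx, EuclideanSpace.norm_eq, EuclideanSpace.norm_eq]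
    simp [Fin.sum_univ_two, mul_pow, hσ, add_comm]

theorem star_dotProduct_mulVec_diagonal_fin_two (a b : ℂ) (x : ℝ) :
    star ![1, (x : ℂ)] ⬝ᵥ (!![a, 0; 0, b] *ᵥ ![1, (x : ℂ)]) = a + b * (x : ℂ) ^ 2 := by
  simp [dotProduct, Fin.sum_univ_two, Complex.conj_ofReal, sq, mul_comm, mul_left_comm]

theorem Amat_eq_upperToeplitz {r : ℝ} (hr : 0 ≤ r) :
    Amat r = upperToeplitz (Real.sqrt r) (1 * (1 - Real.sqrt r ^ 2)) := by
  rw [Real.sq_sqrt hr, one_mul]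
  rfl

theorem smul_inv_Amat {r : ℝ} (hr : 0 < r) :
    (r : ℂ) • (Amat r)⁻¹ = upperToeplitz (Real.sqrt r) (-1 * (1 - Real.sqrt r ^ 2)) := by
  have hs : Real.sqrt r ≠ 0 := (Real.sqrt_pos.mpr hr).ne'
  rw [Amat_eq_upperToeplitz hr.le, inv_upperToeplitz hs, smul_smul, ← Complex.ofReal_pow,
    Real.sq_sqrt hr.le, ← Complex.ofReal_inv, ← Complex.ofReal_mul, mul_inv_cancel₀ hr.ne',
    Complex.ofReal_one, one_smul, neg_mul, one_mul]

theorem Amat_defect_eq {r : ℝ} (hr : 0 < r) :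
    ((r : ℂ) ^ 2 + 1) • (1 : Matrix (Fin 2) (Fin 2) ℂ)
        - ((r : ℂ) ^ 2 • ((Amat r)⁻¹ * ((Amat r)⁻¹)ᴴ) + Amat r * (Amat r)ᴴ) =
      !![-(1 - (r : ℂ)) ^ 2, 0; 0, (1 - (r : ℂ)) ^ 2] := by
  have hs : ((Real.sqrt r : ℝ) : ℂ) ^ 2 = r := by exact_mod_cast Real.sq_sqrt hr.le
  have hB : (r : ℂ) ^ 2 • ((Amat r)⁻¹ * ((Amat r)⁻¹)ᴴ) =
      ((r : ℂ) • (Amat r)⁻¹) * ((r : ℂ) • (Amat r)⁻¹)ᴴ := by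
    rw [conjTranspose_smul, Complex.star_def, Complex.conj_ofReal, smul_mul_smul_comm, sq]
  rw [hB, smul_inv_Amat hr, Amat_eq_upperToeplitz hr.le, upperToeplitz_mul_conjTranspose,
    upperToeplitz_mul_conjTranspose]
  ext i j
  fin_cases i <;> fin_cases j <;> simp [one_apply, hs] <;> ring

/-- For `A = [[√r, 1-r],[0, √r]]` one has `‖A‖ = ‖rA⁻¹‖ = 1` (so `r²·I ≤ AA* ≤ I`),
yet `r²A⁻¹(A⁻¹)* + AA* ≤ (r²+1)I` fails: for `v = (1, √r)`,
`⟨((r²+1)I - r²A⁻¹(A⁻¹)* - AA*)v, v⟩ = r²(r + 1 - 1/r - (2 - 1/r)²) < 0`. -/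
theorem matrix_counterexample (r : ℝ) (hr0 : 0 < r) (hr1 : r < 1) :
    ‖Matrix.toEuclideanCLM (𝕜 := ℂ) (Amat r)‖ = 1 ∧
    ‖Matrix.toEuclideanCLM (𝕜 := ℂ) ((r : ℂ) • (Amat r)⁻¹)‖ = 1 ∧
    (Amat r * (Amat r)ᴴ - (r : ℂ) ^ 2 • 1).PosSemidef ∧
    ((1 : Matrix (Fin 2) (Fin 2) ℂ) - Amat r * (Amat r)ᴴ).PosSemidef ∧
    star (![1, ((Real.sqrt r : ℝ) : ℂ)]) ⬝ᵥ
        ((((r : ℂ) ^ 2 + 1) • (1 : Matrix (Fin 2) (Fin 2) ℂ)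
            - ((r : ℂ) ^ 2 • ((Amat r)⁻¹ * ((Amat r)⁻¹)ᴴ) + Amat r * (Amat r)ᴴ)) *ᵥ
          ![1, ((Real.sqrt r : ℝ) : ℂ)])
      = (r : ℂ) ^ 2 * ((r : ℂ) + 1 - 1 / (r : ℂ) - (2 - 1 / (r : ℂ)) ^ 2) ∧
    r ^ 2 * (r + 1 - 1 / r - (2 - 1 / r) ^ 2) < 0 ∧
    ¬ ((((r : ℂ) ^ 2 + 1) • (1 : Matrix (Fin 2) (Fin 2) ℂ)
        - ((r : ℂ) ^ 2 • ((Amat r)⁻¹ * ((Amat r)⁻¹)ᴴ) + Amat r * (Amat r)ᴴ)).PosSemidef) := by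
  have hs : ((Real.sqrt r : ℝ) : ℂ) ^ 2 = r := by exact_mod_cast Real.sq_sqrt hr0.le
  have hsq : Real.sqrt r ^ 2 ≤ 1 := by rw [Real.sq_sqrt hr0.le]; exact hr1.le
  have hA := Amat_eq_upperToeplitz hr0.le
  have hcubic : r ^ 2 * (r + 1 - 1 / r - (2 - 1 / r) ^ 2) = (r - 1) ^ 3 := by
    field_simp
    ring
  have hform : star (![1, ((Real.sqrt r : ℝ) : ℂ)]) ⬝ᵥ
      ((((r : ℂ) ^ 2 + 1) • (1 : Matrix (Fin 2) (Fin 2) ℂ)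
          - ((r : ℂ) ^ 2 • ((Amat r)⁻¹ * ((Amat r)⁻¹)ᴴ) + Amat r * (Amat r)ᴴ)) *ᵥ
        ![1, ((Real.sqrt r : ℝ) : ℂ)]) = ((r - 1) ^ 3 : ℝ) := by
    rw [Amat_defect_eq hr0, star_dotProduct_mulVec_diagonal_fin_two, hs]
    push_cast
    ring
  have hneg : (r - 1) ^ 3 < 0 := Odd.pow_neg (by decide) (by linarith)
  refine ⟨?_, ?_, ?_, ?_, ?_, hcubic ▸ hneg, fun hpsd ↦ ?_⟩
  · rw [hA]
    exact norm_toEuclideanCLM_upperToeplitz hsq (one_pow 2)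
  · rw [smul_inv_Amat hr0]
    exact norm_toEuclideanCLM_upperToeplitz hsq (by norm_num)
  · rw [show (r : ℂ) ^ 2 = ((Real.sqrt r : ℝ) : ℂ) ^ 4 by rw [← hs]; ring, hA]
    exact posSemidef_upperToeplitz_mul_conjTranspose_sub hsq (one_pow 2)
  · rw [hA]
    exact posSemidef_one_sub_upperToeplitz_mul_conjTranspose hsq (one_pow 2)
  · rw [hform, ← hcubic]
    push_cast
    rfl
  · have := hpsd.dotProduct_mulVec_nonneg ![1, ((Real.sqrt r : ℝ) : ℂ)]
    rw [hform, Complex.zero_le_real] at this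
    linarith

end
end
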